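/- arXiv:1702.01823 — 3 statements merged into one kernel-verified Lean document; each statement's English description precedes it below -/
import Mathlib

section
/- The hit rate h(C) = \lambda \sum_{i=1}^n p_i (1 - e^{-\lambda p_i T(C)}) is a strictly increasing function of the cache size C on (0,n), where T(C) is the characteristic time. -/
/-!
Set `F(t) = ∑ᵢ (1 - exp(-λ pᵢ t))`. Each summand is strictly increasing in `t`, so `F` is strictly
increasing, and `F (T C) = C` forces `T` to be strictly increasing in `C`. The hit rate is
`λ ∑ᵢ pᵢ (1 - exp(-λ pᵢ t))` evaluated at `t = T C`, again a strictly increasing function of `t`.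
-/

open Real Set

theorem strictMono_one_sub_exp_neg_mul {a : ℝ} (ha : 0 < a) :
    StrictMono fun t => 1 - exp (-(a * t)) := fun _ _ hxy => by
  have := exp_strictMono (neg_lt_neg (mul_lt_mul_of_pos_left hxy ha))
  linarith

theorem strictMono_finset_sum {ι α M : Type*} [Fintype ι] [Nonempty ι] [Preorder α]
    [AddCommMonoid M] [PartialOrder M] [IsOrderedCancelAddMonoid M] {f : ι → α → M}
    (hf : ∀ i, StrictMono (f i)) : StrictMono fun x => ∑ i, f i x :=
  fun _ _ hxy => Finset.sum_lt_sum_of_nonempty Finset.univ_nonempty fun i _ => hf i hxy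

theorem StrictMono.strictMonoOn_of_leftInvOn {α β : Type*} [Preorder α] [LinearOrder β]
    {F : β → α} {T : α → β} {s : Set α} (hF : StrictMono F) (hFT : LeftInvOn F T s) :
    StrictMonoOn T s := fun x hx y hy hxy =>
  hF.lt_iff_lt.mp (by rwa [hFT hx, hFT hy])

theorem hit_rate_strictMono_general
    (n : ℕ) (hn : 0 < n) (lam : ℝ) (hlam : 0 < lam)
    (p : Fin n → ℝ) (hp : ∀ i, 0 < p i)
    (T : ℝ → ℝ)
    (hT : ∀ C ∈ Set.Ioo (0 : ℝ) n, 0 < T C ∧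
      ∑ i, (1 - Real.exp (-(lam * p i * T C))) = C)
    (h : ℝ → ℝ)
    (hh : h = fun C => lam * ∑ i, p i * (1 - Real.exp (-(lam * p i * T C)))) :
    StrictMonoOn h (Set.Ioo (0 : ℝ) n) := by
  have : Nonempty (Fin n) := ⟨⟨0, hn⟩⟩
  have hsummand (i : Fin n) := strictMono_one_sub_exp_neg_mul (mul_pos hlam (hp i))
  have hT_mono : StrictMonoOn T (Ioo 0 n) :=
    (strictMono_finset_sum hsummand).strictMonoOn_of_leftInvOn fun C hC => (hT C hC).2
  have hhit : StrictMono fun t => lam * ∑ i, p i * (1 - exp (-(lam * p i * t))) :=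
    (strictMono_finset_sum fun i => (hsummand i).const_mul (hp i)).const_mul hlam
  exact hh ▸ hhit.comp_strictMonoOn hT_mono

/-- the hit rate `h(C)` is strictly increasing in the cache size. -/
theorem hit_rate_strictMono
    (n : ℕ) (hn : 0 < n) (lam : ℝ) (hlam : 0 < lam)
    (p : Fin n → ℝ) (hp : ∀ i, 0 < p i) (hsum : ∑ i, p i = 1)
    (T : ℝ → ℝ)
    (hT : ∀ C ∈ Set.Ioo (0 : ℝ) n, 0 < T C ∧
      ∑ i, (1 - Real.exp (-(lam * p i * T C))) = C)
    (h : ℝ → ℝ)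
    (hh : h = fun C => lam * ∑ i, p i * (1 - Real.exp (-(lam * p i * T C)))) :
    StrictMonoOn h (Set.Ioo (0 : ℝ) n) :=
  hit_rate_strictMono_general n hn lam hlam p hp T hT h hh
end

section
/- The hit rate h(C) = \lambda \sum_{i=1}^n p_i (1 - e^{-\lambda p_i T(C)}) is a concave function of the cache size C on (0,n): its second derivative satisfies d^2 h / dC^2 \le 0. -/
/-!
Put `q i = λ p i` and `M k t = ∑ i, q i ^ k * exp (-(q i * t))`. As functions of the
characteristic time `t`, the occupancy `∑ i, (1 - exp (-(q i * t)))` and the hit rate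
`∑ i, q i * (1 - exp (-(q i * t)))` have derivatives `M 1 > 0` and `M 2`. Since `T` inverts the
occupancy, `dh/dC = (M 2 / M 1) ∘ T`, and differentiating once more gives
`d²h/dC² = ((M 2 ^ 2 - M 1 * M 3) / M 1 ^ 3) ∘ T`, which is `≤ 0` by Cauchy–Schwarz.
-/

open Real Set Filter

section ExpMoment

variable {ι : Type*} [Fintype ι] (q : ι → ℝ)

noncomputable def expMoment (k : ℕ) (t : ℝ) : ℝ :=
  ∑ i, q i ^ k * exp (-(q i * t))

theorem hasDerivAt_expMoment (k : ℕ) (t : ℝ) :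
    HasDerivAt (expMoment q k) (-expMoment q (k + 1) t) t := by
  have hterm (i : ι) : HasDerivAt (fun t => q i ^ k * exp (-(q i * t)))
      (-(q i ^ (k + 1) * exp (-(q i * t)))) t := by
    refine ((((hasDerivAt_id t).const_mul (q i)).fun_neg.exp).const_mul (q i ^ k)).congr_deriv ?_
    simp only [id, mul_one]
    ring
  rw [expMoment, ← Finset.sum_neg_distrib]
  exact HasDerivAt.fun_sum fun i _ => hterm i

variable {q}

theorem expMoment_pos [Nonempty ι] (hq : ∀ i, 0 < q i) (k : ℕ) (t : ℝ) :
    0 < expMoment q k t :=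
  Finset.sum_pos (fun i _ => by have := hq i; positivity) Finset.univ_nonempty

theorem expMoment_two_sq_le (hq : ∀ i, 0 ≤ q i) (t : ℝ) :
    expMoment q 2 t ^ 2 ≤ expMoment q 1 t * expMoment q 3 t :=
  Finset.sum_sq_le_sum_mul_sum_of_sq_le_mul _ (fun i _ => by have := hq i; positivity)
    (fun i _ => by have := hq i; positivity) fun i _ => le_of_eq (by ring)

variable (q)

theorem hasDerivAt_expMoment_two_div_one {t : ℝ} (h1 : expMoment q 1 t ≠ 0) :
    HasDerivAt (fun t => expMoment q 2 t / expMoment q 1 t)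
      ((expMoment q 2 t ^ 2 - expMoment q 1 t * expMoment q 3 t) / expMoment q 1 t ^ 2) t := by
  refine ((hasDerivAt_expMoment q 2 t).div (hasDerivAt_expMoment q 1 t) h1).congr_deriv ?_
  ring

noncomputable def occupancyMoment (k : ℕ) (t : ℝ) : ℝ :=
  ∑ i, q i ^ k * (1 - exp (-(q i * t)))

theorem hasDerivAt_occupancyMoment (k : ℕ) (t : ℝ) :
    HasDerivAt (occupancyMoment q k) (expMoment q (k + 1) t) t := by
  have hsplit : occupancyMoment q k = fun t => ∑ i, q i ^ k - expMoment q k t := by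
    ext t
    simp only [occupancyMoment, expMoment, mul_sub, mul_one, Finset.sum_sub_distrib]
  rw [hsplit, ← neg_neg (expMoment q (k + 1) t)]
  exact (hasDerivAt_expMoment q k t).const_sub _

end ExpMoment

section LeftInverse

variable {g T : ℝ → ℝ} {U : Set ℝ} {C : ℝ}

theorem StrictMono.continuousAt_of_leftInvOn (hg : StrictMono g) (hU : IsOpen U)
    (hgT : LeftInvOn g T U) (hC : C ∈ U) : ContinuousAt T C := by
  have hgT_near : ∀ᶠ y in nhds C, g (T y) = y := (hU.eventually_mem hC).mono hgT
  refine tendsto_order.2 ⟨fun a ha => ?_, fun a ha => ?_⟩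
  · filter_upwards [eventually_gt_nhds (hgT hC ▸ hg ha), hgT_near] with y hy hgy
    exact hg.lt_iff_lt.1 (by rwa [hgy])
  · filter_upwards [eventually_lt_nhds (hgT hC ▸ hg ha), hgT_near] with y hy hgy
    exact hg.lt_iff_lt.1 (by rwa [hgy])

theorem HasDerivAt.comp_leftInvOn {f : ℝ → ℝ} {f' g' : ℝ} (hf : HasDerivAt f f' (T C))
    (hg : StrictMono g) (hg' : HasDerivAt g g' (T C)) (hg'0 : g' ≠ 0) (hU : IsOpen U)
    (hgT : LeftInvOn g T U) (hC : C ∈ U) :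
    HasDerivAt (f ∘ T) (f' / g') C := by
  have hT := (hg'.of_local_left_inverse (hg.continuousAt_of_leftInvOn hU hgT hC) hg'0
    ((hU.eventually_mem hC).mono hgT))
  simpa only [div_eq_mul_inv] using hf.comp C hT

theorem concaveOn_comp_of_leftInvOn {f f' g' r' : ℝ → ℝ} (hU : IsOpen U)
    (hUc : Convex ℝ U) (hf : ∀ t, HasDerivAt f (f' t) t) (hg : ∀ t, HasDerivAt g (g' t) t)
    (hg' : ∀ t, 0 < g' t) (hr : ∀ t, HasDerivAt (fun t => f' t / g' t) (r' t) t)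
    (hr' : ∀ t, r' t ≤ 0) (hgT : LeftInvOn g T U) :
    ConcaveOn ℝ U (f ∘ T) ∧ ∀ C ∈ U, deriv (deriv (f ∘ T)) C ≤ 0 := by
  have hg_mono : StrictMono g := strictMono_of_deriv_pos fun t => (hg t).deriv ▸ hg' t
  have hderiv {φ : ℝ → ℝ} {φ' C : ℝ} (hφ : HasDerivAt φ φ' (T C)) (hC : C ∈ U) :
      HasDerivAt (φ ∘ T) (φ' / g' (T C)) C :=
    hφ.comp_leftInvOn hg_mono (hg _) (hg' _).ne' hU hgT hC
  have hD1 (C) (hC : C ∈ U) := hderiv (hf (T C)) hC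
  have hD2 (C) (hC : C ∈ U) := hderiv (hr (T C)) hC
  have hD2_nonpos (C : ℝ) : r' (T C) / g' (T C) ≤ 0 :=
    div_nonpos_of_nonpos_of_nonneg (hr' _) (hg' _).le
  refine ⟨concaveOn_of_hasDerivWithinAt2_nonpos (f' := (fun t => f' t / g' t) ∘ T) hUc
    (fun C hC => (hD1 C hC).continuousAt.continuousWithinAt) ?_ ?_ fun C _ => hD2_nonpos C,
    fun C hC => ?_⟩
  · rw [hU.interior_eq]
    exact fun C hC => (hD1 C hC).hasDerivWithinAt
  · rw [hU.interior_eq]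
    exact fun C hC => (hD2 C hC).hasDerivWithinAt
  · have hderiv_eq : deriv (f ∘ T) =ᶠ[nhds C] (fun t => f' t / g' t) ∘ T :=
      (hU.eventually_mem hC).mono fun C' hC' => (hD1 C' hC').deriv
    rw [((hD2 C hC).congr_of_eventuallyEq hderiv_eq).deriv]
    exact hD2_nonpos C

end LeftInverse

theorem hit_rate_concave_general
    (n : ℕ) (hn : 0 < n) (lam : ℝ) (hlam : 0 < lam)
    (p : Fin n → ℝ) (hp : ∀ i, 0 < p i)
    (T : ℝ → ℝ)
    (hT : ∀ C ∈ Set.Ioo (0 : ℝ) n, 0 < T C ∧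
      ∑ i, (1 - Real.exp (-(lam * p i * T C))) = C)
    (h : ℝ → ℝ)
    (hh : h = fun C => lam * ∑ i, p i * (1 - Real.exp (-(lam * p i * T C)))) :
    ConcaveOn ℝ (Set.Ioo (0 : ℝ) n) h ∧
      ∀ C ∈ Set.Ioo (0 : ℝ) n, deriv (deriv h) C ≤ 0 := by
  have : Nonempty (Fin n) := ⟨⟨0, hn⟩⟩
  set q : Fin n → ℝ := fun i => lam * p i
  have hq (i : Fin n) : 0 < q i := mul_pos hlam (hp i)
  have hhT : h = occupancyMoment q 1 ∘ T := by
    ext C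
    simp only [hh, Function.comp_apply, occupancyMoment, Finset.mul_sum, q]
    exact Finset.sum_congr rfl fun i _ => by ring
  have hgT : LeftInvOn (occupancyMoment q 0) T (Ioo 0 n) := fun C hC => by
    simpa [occupancyMoment] using (hT C hC).2
  rw [hhT]
  exact concaveOn_comp_of_leftInvOn isOpen_Ioo (convex_Ioo _ _) (hasDerivAt_occupancyMoment q 1)
    (hasDerivAt_occupancyMoment q 0) (expMoment_pos hq 1)
    (fun t => hasDerivAt_expMoment_two_div_one q (expMoment_pos hq 1 t).ne')
    (fun t => div_nonpos_of_nonpos_of_nonneg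
      (sub_nonpos.2 (expMoment_two_sq_le (fun i => (hq i).le) t)) (sq_nonneg _))
    hgT

/-- the hit rate `h(C)` is concave in the cache size, with
nonpositive second derivative. -/
theorem hit_rate_concave
    (n : ℕ) (hn : 0 < n) (lam : ℝ) (hlam : 0 < lam)
    (p : Fin n → ℝ) (hp : ∀ i, 0 < p i) (hple : ∀ i, p i ≤ 1)
    (hmono : Monotone p) (hsum : ∑ i, p i = 1)
    (T : ℝ → ℝ)
    (hT : ∀ C ∈ Set.Ioo (0 : ℝ) n, 0 < T C ∧
      ∑ i, (1 - Real.exp (-(lam * p i * T C))) = C)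
    (h : ℝ → ℝ)
    (hh : h = fun C => lam * ∑ i, p i * (1 - Real.exp (-(lam * p i * T C)))) :
    ConcaveOn ℝ (Set.Ioo (0 : ℝ) n) h ∧
      ∀ C ∈ Set.Ioo (0 : ℝ) n, deriv (deriv h) C ≤ 0 :=
  hit_rate_concave_general n hn lam hlam p hp T hT h hh
end

section
/- Suppose g_1, \dots, g_n are real numbers and 0 \le p_1 \le p_2 \le \dots \le p_n \le 1 and weights w_i \ge 0 are such that \sum_{i=1}^n w_i p_i g_i = 0, and there exists an index l with g_i \ge 0 for i \le l and g_i \le 0 for i > l. Then \sum_{i=1}^n w_i p_i^2 g_i \le 0. -/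
open Real Set

/- A monotone `p` against a `g` with one sign change: a threshold `c` separates the `p i` where
`g ≥ 0` from those where `g ≤ 0`, so `(p i - c) * g i ≤ 0` termwise. Multiplying by the weights
`w i * p i ≥ 0` and summing gives `∑ w p² g ≤ c ∑ w p g = 0`. -/

theorem Finset.sum_mul_mul_le_mul_sum_of_sub_mul_nonpos {ι : Type*} (s : Finset ι)
    (v f g : ι → ℝ) (c : ℝ) (hv : ∀ i ∈ s, 0 ≤ v i) (hfg : ∀ i ∈ s, (f i - c) * g i ≤ 0) :
    ∑ i ∈ s, v i * f i * g i ≤ c * ∑ i ∈ s, v i * g i := by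
  rw [Finset.mul_sum]
  refine Finset.sum_le_sum fun i hi => ?_
  have h := mul_nonpos_of_nonneg_of_nonpos (hv i hi) (hfg i hi)
  linarith

theorem Monotone.exists_sub_mul_nonpos_of_sign_change {n : ℕ} {p : Fin n → ℝ} (hp : Monotone p)
    (g : Fin n → ℝ) (l : ℕ) (hgpos : ∀ i : Fin n, (i : ℕ) < l → 0 ≤ g i)
    (hgneg : ∀ i : Fin n, l ≤ (i : ℕ) → g i ≤ 0) :
    ∃ c, ∀ i, (p i - c) * g i ≤ 0 := by
  obtain ⟨c, hbelow, habove⟩ : ∃ c, (∀ i : Fin n, (i : ℕ) < l → p i ≤ c) ∧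
      ∀ i : Fin n, l ≤ (i : ℕ) → c ≤ p i := by
    by_cases hl : l < n
    · exact ⟨p ⟨l, hl⟩, fun i hi => hp (Fin.mk_le_mk.2 hi.le), fun i hi => hp (Fin.mk_le_mk.2 hi)⟩
    · obtain ⟨c, hc⟩ := (Set.finite_range p).bddAbove
      exact ⟨c, fun i _ => hc (Set.mem_range_self i), fun i hi => absurd (hi.trans_lt i.isLt) hl⟩
  refine ⟨c, fun i => ?_⟩
  rcases lt_or_ge (i : ℕ) l with hi | hi
  · exact mul_nonpos_of_nonpos_of_nonneg (sub_nonpos.2 (hbelow i hi)) (hgpos i hi)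
  · exact mul_nonpos_of_nonneg_of_nonpos (sub_nonneg.2 (habove i hi)) (hgneg i hi)

theorem single_sign_change_weighted_ineq_general
    (n : ℕ) (g p w : Fin n → ℝ)
    (hp0 : ∀ i, 0 ≤ p i) (hpmono : Monotone p)
    (hw : ∀ i, 0 ≤ w i)
    (hzero : ∑ i, w i * p i * g i = 0)
    (l : ℕ)
    (hgpos : ∀ i : Fin n, (i : ℕ) < l → 0 ≤ g i)
    (hgneg : ∀ i : Fin n, l ≤ (i : ℕ) → g i ≤ 0) :
    ∑ i, w i * p i ^ 2 * g i ≤ 0 := by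
  obtain ⟨c, hc⟩ := hpmono.exists_sub_mul_nonpos_of_sign_change g l hgpos hgneg
  calc ∑ i, w i * p i ^ 2 * g i = ∑ i, (w i * p i) * p i * g i := by simp only [sq, mul_assoc]
    _ ≤ c * ∑ i, w i * p i * g i :=
      Finset.univ.sum_mul_mul_le_mul_sum_of_sub_mul_nonpos _ p g c
        (fun i _ => mul_nonneg (hw i) (hp0 i)) (fun i _ => hc i)
    _ = 0 := by rw [hzero, mul_zero]

/-- single-sign-change weighted inequality used in the proof of the
concavity of the LRU hit rate. -/
theorem single_sign_change_weighted_ineq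
    (n : ℕ) (g p w : Fin n → ℝ)
    (hp0 : ∀ i, 0 ≤ p i) (hp1 : ∀ i, p i ≤ 1) (hpmono : Monotone p)
    (hw : ∀ i, 0 ≤ w i)
    (hzero : ∑ i, w i * p i * g i = 0)
    (l : ℕ)
    (hgpos : ∀ i : Fin n, (i : ℕ) < l → 0 ≤ g i)
    (hgneg : ∀ i : Fin n, l ≤ (i : ℕ) → g i ≤ 0) :
    ∑ i, w i * p i ^ 2 * g i ≤ 0 :=
  single_sign_change_weighted_ineq_general n g p w hp0 hpmono hw hzero l hgpos hgneg
end
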